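/- arXiv:1901.10686 — 4 statements merged into one kernel-verified Lean document; each statement's English description precedes it below -/
import Mathlib

section
/- Let R be a commutative Noetherian ring, P a finitely generated projective R-module, N ⊆ R an ideal, and p₁,…,p_d ∈ P elements whose images in P/NP form a basis of the free R/N-module P/NP. Then P_{1+N} is a free R_{1+N}-module with basis the images of p₁,…,p_d, where R_{1+N} denotes localization at the multiplicative set 1 + N. -/
/-!
In `R_{1+N}` every element of `1 + N R_{1+N}` is a unit, so `N R_{1+N}` lies in the Jacobson
radical. The images of the `pᵢ` span `P_{1+N}` modulo `N P_{1+N}`, hence span it by Nakayama: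
`φ : R_{1+N}^d → P_{1+N}` is onto. Clearing denominators, a relation among the images has all
its coefficients in `N R_{1+N}`, so `ker φ ⊆ N · R_{1+N}^d`. As `P_{1+N}` is projective, `φ`
splits and `ker φ` is a finitely generated direct summand; projecting onto it gives
`ker φ = N · ker φ`, and Nakayama again gives `ker φ = 0`.
-/

/-- The multiplicative set `1 + N = {1 + a : a ∈ N}` for an ideal `N`. -/
def onePlus {R : Type} [CommRing R] (N : Ideal R) : Submonoid R where
  carrier := {x | ∃ a ∈ N, x = 1 + a}
  one_mem' := ⟨0, N.zero_mem, by ring⟩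
  mul_mem' := by
    rintro x y ⟨a, ha, rfl⟩ ⟨b, hb, rfl⟩
    exact ⟨a + b + a * b, by
      exact add_mem (add_mem ha hb) (N.mul_mem_right b ha), by ring⟩

open Submodule

section Projective

variable {ι A F M : Type*} [CommRing A] [AddCommGroup F] [Module A F] [AddCommGroup M] [Module A M]
  [Module.Projective A M] {I : Ideal A}

theorem LinearMap.injective_of_ker_le_smul_top [Module.Finite A F] (hI : I ≤ Ideal.jacobson ⊥)
    {φ : F →ₗ[A] M} (hφ : Function.Surjective φ) (hker : LinearMap.ker φ ≤ I • ⊤) :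
    Function.Injective φ := by
  obtain ⟨s, hs⟩ := Module.projective_lifting_property φ LinearMap.id hφ
  set π : F →ₗ[A] F := LinearMap.id - s ∘ₗ φ
  have hπ_ker : ∀ k ∈ LinearMap.ker φ, π k = k := fun k hk => by
    simp [π, LinearMap.mem_ker.mp hk]
  have hrange : LinearMap.range π = LinearMap.ker φ := by
    refine le_antisymm ?_ fun k hk => ⟨k, hπ_ker k hk⟩
    rintro _ ⟨v, rfl⟩
    simp [π, ← LinearMap.comp_apply φ s, hs]
  have hfg : (LinearMap.ker φ).FG := by
    rw [← hrange, LinearMap.range_eq_map]; exact Module.Finite.fg_top.map π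
  have hle : LinearMap.ker φ ≤ I • LinearMap.ker φ := fun k hk => by
    rw [← hπ_ker k hk, ← hrange, LinearMap.range_eq_map, ← map_smul'']
    exact mem_map_of_mem (hker hk)
  rw [← LinearMap.ker_eq_bot]
  exact eq_bot_of_le_smul_of_le_jacobson_bot I _ hfg hle hI

theorem linearIndependent_of_coeffs_mem_of_le_jacobson_bot [Fintype ι]
    (hI : I ≤ Ideal.jacobson ⊥) {v : ι → M} (hspan : span A (Set.range v) = ⊤)
    (hcoeff : ∀ c : ι → A, ∑ i, c i • v i = 0 → ∀ i, c i ∈ I) : LinearIndependent A v := by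
  classical
  rw [linearIndependent_iff_injective_fintypeLinearCombination]
  refine LinearMap.injective_of_ker_le_smul_top hI ?_ fun c hc => ?_
  · rwa [← LinearMap.range_eq_top, Fintype.range_linearCombination]
  · rw [LinearMap.mem_ker, Fintype.linearCombination_apply] at hc
    rw [pi_eq_sum_univ c]
    exact sum_mem fun i _ => smul_mem_smul (hcoeff c hc i) mem_top

end Projective

section OnePlus

variable {R : Type} [CommRing R] (N : Ideal R) (R' : Type*) [CommRing R'] [Algebra R R']
  [IsLocalization (onePlus N) R']

theorem isUnit_one_add_of_mem_map_onePlus {z : R'} (hz : z ∈ N.map (algebraMap R R')) :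
    IsUnit (1 + z) := by
  obtain ⟨⟨a, s⟩, h⟩ := (IsLocalization.mem_map_algebraMap_iff (onePlus N) R').mp hz
  obtain ⟨n, hn, hs⟩ := s.2
  have hsa : (s : R) + a ∈ onePlus N := ⟨n + a, add_mem hn a.2, by rw [hs]; ring⟩
  have hmul : (1 + z) * algebraMap R R' s = algebraMap R R' ((s : R) + a) := by
    rw [map_add, add_mul, one_mul, h]
  exact isUnit_of_mul_isUnit_left
    (hmul ▸ IsLocalization.map_units R' (⟨_, hsa⟩ : onePlus N))

theorem map_onePlus_le_jacobson_bot : N.map (algebraMap R R') ≤ Ideal.jacobson ⊥ :=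
  fun z hz => Ideal.mem_jacobson_bot.mpr fun y => add_comm 1 (z * y) ▸
    isUnit_one_add_of_mem_map_onePlus N R' (Ideal.mul_mem_right y _ hz)

end OnePlus

section QuotientBasis

variable {ι R P : Type*} [CommRing R] [AddCommGroup P] [Module R P] {N : Ideal R} {p : ι → P}
  (b : Module.Basis ι (R ⧸ N) (P ⧸ (N • (⊤ : Submodule R P))))
  (hb : ∀ i, b i = Submodule.Quotient.mk (p i))
include hb

theorem span_range_sup_smul_top_eq_top_of_basis_quotient :
    span R (Set.range p) ⊔ N • ⊤ = ⊤ := by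
  have hrange : Set.range b = (N • ⊤ : Submodule R P).mkQ '' Set.range p := by
    rw [← Set.range_comp]; exact congrArg Set.range (funext hb)
  rw [sup_comm, ← map_mkQ_eq_top, map_span, ← hrange,
    ← restrictScalars_span R (R ⧸ N) Ideal.Quotient.mk_surjective, b.span_eq,
    restrictScalars_top]

theorem mem_of_sum_smul_mem_smul_top_of_basis_quotient [Fintype ι] (c : ι → R)
    (hc : ∑ i, c i • p i ∈ N • (⊤ : Submodule R P)) (i : ι) : c i ∈ N := by
  have hzero : ∑ j, Ideal.Quotient.mk N (c j) • b j = 0 := by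
    simp_rw [hb, Module.Quotient.mk_smul_mk, ← mkQ_apply, ← map_sum, mkQ_apply]
    exact (Submodule.Quotient.mk_eq_zero _).mpr hc
  exact Ideal.Quotient.eq_zero_iff_mem.mp
    (Fintype.linearIndependent_iff.mp b.linearIndependent _ hzero i)

end QuotientBasis

section Localization

variable {R P P' : Type*} (R' : Type*) [CommRing R] [CommRing R'] [Algebra R R']
  (S : Submonoid R) [IsLocalization S R'] [AddCommGroup P] [Module R P] [AddCommGroup P']
  [Module R P'] [Module R' P'] [IsScalarTower R R' P'] (f : P →ₗ[R] P') [IsLocalizedModule S f]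
  {N : Ideal R}

include S in
theorem span_image_sup_map_smul_top_eq_top_of_isLocalizedModule {v : Set P}
    (hv : span R v ⊔ N • ⊤ = ⊤) :
    span R' (f '' v) ⊔ N.map (algebraMap R R') • (⊤ : Submodule R' P') = ⊤ := by
  have hsmul : (N • ⊤ : Submodule R P).map f ≤
      (N.map (algebraMap R R') • (⊤ : Submodule R' P')).restrictScalars R := by
    rw [map_smul'', Ideal.smul_restrictScalars, restrictScalars_top]
    exact smul_mono_right _ le_top
  have htop : span R (v ∪ (N • ⊤ : Submodule R P)) = ⊤ := by
    rw [span_union, span_eq, hv]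
  refine top_unique ((span_eq_top_of_isLocalizedModule R' S f htop).ge.trans (span_le.mpr ?_))
  rw [Set.image_union]
  exact Set.union_subset (subset_span.trans (SetLike.coe_subset_coe.mpr le_sup_left))
    (hsmul.trans (restrictScalars_mono R le_sup_right))

include S in
theorem mem_map_of_sum_smul_eq_zero_of_isLocalizedModule {ι : Type*} [Fintype ι] {p : ι → P}
    (hp : ∀ c : ι → R, ∑ i, c i • p i = 0 → ∀ i, c i ∈ N)
    (x : ι → R') (hx : ∑ i, x i • f (p i) = 0) (i : ι) : x i ∈ N.map (algebraMap R R') := by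
  obtain ⟨s, hs⟩ := IsLocalization.exist_integer_multiples S Finset.univ x
  choose r hr using fun j => hs j (Finset.mem_univ j)
  have hf : f (∑ j, r j • p j) = f 0 := by
    calc f (∑ j, r j • p j) = ∑ j, algebraMap R R' (r j) • f (p j) := by
          simp only [map_sum, map_smul, algebraMap_smul]
      _ = (s : R) • ∑ j, x j • f (p j) := by
          simp only [hr, smul_assoc, Finset.smul_sum]
      _ = f 0 := by rw [hx, smul_zero, map_zero]
  obtain ⟨t, ht⟩ := IsLocalizedModule.exists_of_eq (S := S) hf
  simp_rw [Submonoid.smul_def, smul_zero, Finset.smul_sum, smul_smul] at ht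
  have hcoeff := hp (fun j => t * r j) ht
  have hxi : x i = IsLocalization.mk' R' (r i) s := by
    rw [IsLocalization.eq_mk'_iff_mul_eq, hr i, Algebra.smul_def, mul_comm]
  exact hxi ▸ (IsLocalization.mk'_mem_map_algebraMap_iff S R' N (r i) s).mpr ⟨t, t.2, hcoeff i⟩

end Localization

theorem basis_lifts_to_one_plus_localization_general {R : Type} [CommRing R]
    (P : Type) [AddCommGroup P] [Module R P] [Module.Finite R P] [Module.Projective R P]
    (N : Ideal R) (d : ℕ) (p : Fin d → P)
    (b : Module.Basis (Fin d) (R ⧸ N) (P ⧸ (N • (⊤ : Submodule R P))))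
    (hb : ∀ i, b i = Submodule.Quotient.mk (p i)) :
    ∃ c : Module.Basis (Fin d) (Localization (onePlus N)) (LocalizedModule (onePlus N) P),
      ∀ i, c i = LocalizedModule.mkLinearMap (onePlus N) P (p i) := by
  set S := onePlus N
  set f := LocalizedModule.mkLinearMap S P
  have hjac := map_onePlus_le_jacobson_bot N (Localization S)
  have : Module.Finite (Localization S) (LocalizedModule S P) := .of_isLocalizedModule S f
  have hspan : span (Localization S) (Set.range (f ∘ p)) = ⊤ := by
    have hmod := span_image_sup_map_smul_top_eq_top_of_isLocalizedModule (Localization S) S f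
      (span_range_sup_smul_top_eq_top_of_basis_quotient b hb)
    rw [← Set.range_comp] at hmod
    exact top_unique (le_of_le_smul_of_le_jacobson_bot Module.Finite.fg_top hjac hmod.ge)
  have hli : LinearIndependent (Localization S) (f ∘ p) :=
    linearIndependent_of_coeffs_mem_of_le_jacobson_bot hjac hspan
      (mem_map_of_sum_smul_eq_zero_of_isLocalizedModule (Localization S) S f
        fun c hc => mem_of_sum_smul_mem_smul_top_of_basis_quotient b hb c (hc ▸ zero_mem _))
  exact ⟨.mk hli hspan.ge, Module.Basis.mk_apply hli hspan.ge⟩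

/-- If the images of `p₁, …, p_d` in `P/NP` form a basis of the free
`R/N`-module `P/NP`, then the images of `p₁, …, p_d` in `P_{1+N}` form a basis
of the free `R_{1+N}`-module `P_{1+N}`. -/
theorem basis_lifts_to_one_plus_localization {R : Type} [CommRing R] [IsNoetherianRing R]
    (P : Type) [AddCommGroup P] [Module R P] [Module.Finite R P] [Module.Projective R P]
    (N : Ideal R) (d : ℕ) (p : Fin d → P)
    (b : Module.Basis (Fin d) (R ⧸ N) (P ⧸ (N • (⊤ : Submodule R P))))
    (hb : ∀ i, b i = Submodule.Quotient.mk (p i)) :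
    ∃ c : Module.Basis (Fin d) (Localization (onePlus N)) (LocalizedModule (onePlus N) P),
      ∀ i, c i = LocalizedModule.mkLinearMap (onePlus N) P (p i) :=
  basis_lifts_to_one_plus_localization_general P N d p b hb
end

section
/- Let R be a commutative Noetherian ring of dimension d ≥ 2, J ⊆ R an ideal of height d, and a₁,…,a_d ∈ J elements generating J modulo NJ for an ideal N with NJ ⊆ J². Then there exists c ∈ NJ such that J = (a₁,…,a_d, c). -/
/-!
Squaring `J = I + NJ` (with `I = (a₁, …, a_d)`) and using `NJ ⊆ J²` gives `J = I + (NJ)·J`,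
so the finitely generated module `J/I` satisfies `J/I = (NJ)·(J/I)`. Nakayama's lemma yields
`c ∈ NJ` acting as the identity on `J/I`, i.e. `x - cx ∈ I` for all `x ∈ J`,
whence `J = I + (c)`.
-/

/-- The height of an ideal: the infimum, over primes containing it, of the
height of the prime in the prime spectrum. -/
noncomputable def idealHeight {R : Type} [CommRing R] (J : Ideal R) : ℕ∞ :=
  ⨅ p : {p : PrimeSpectrum R // J ≤ p.asIdeal}, Order.height p.val

namespace Ideal

variable {R : Type*} [CommRing R]

theorem exists_mem_forall_sub_mul_mem_of_le_sup_mul {I J K : Ideal R} (hJ : J.FG)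
    (h : J ≤ I ⊔ K * J) : ∃ c ∈ K, ∀ x ∈ J, x - c * x ∈ I := by
  let π := (I : Submodule R R).mkQ
  have hle : Submodule.map π J ≤ K • Submodule.map π J := by
    rw [← Submodule.map_smul'', Submodule.map_le_iff_le_comap]
    intro x hx
    obtain ⟨y, hy, z, hz, rfl⟩ := Submodule.mem_sup.mp (h hx)
    have hy0 : π y = 0 := (Submodule.Quotient.mk_eq_zero _).mpr hy
    rw [Submodule.mem_comap, map_add, hy0, zero_add]
    exact Submodule.mem_map_of_mem hz
  obtain ⟨c, hcK, hc⟩ :=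
    Submodule.exists_mem_and_smul_eq_self_of_fg_of_le_smul K _ (Submodule.FG.map π hJ) hle
  refine ⟨c, hcK, fun x hx => ?_⟩
  rw [← Submodule.Quotient.mk_eq_zero (I : Submodule R R), Submodule.Quotient.mk_sub]
  exact sub_eq_zero.mpr (hc _ (Submodule.mem_map_of_mem hx)).symm

theorem exists_mem_eq_sup_span_singleton_of_le_sup_mul {I J K : Ideal R} (hJ : J.FG)
    (hIJ : I ≤ J) (hKJ : K ≤ J) (h : J ≤ I ⊔ K * J) : ∃ c ∈ K, J = I ⊔ span {c} := by
  obtain ⟨c, hcK, hc⟩ := exists_mem_forall_sub_mul_mem_of_le_sup_mul hJ h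
  refine ⟨c, hcK, le_antisymm (fun x hx => ?_) ?_⟩
  · rw [← sub_add_cancel x (c * x)]
    exact add_mem (mem_sup_left (hc x hx))
      (mem_sup_right (mem_span_singleton'.mpr ⟨x, mul_comm x c⟩))
  · exact sup_le hIJ ((span_singleton_le_iff_mem J).mpr (hKJ hcK))

theorem le_sup_mul_mul_of_eq_sup_mul {I J N : Ideal R} (hgen : J = I ⊔ N * J)
    (hNJ : N * J ≤ J ^ 2) : J ≤ I ⊔ N * J * J := by
  have hsq : J ^ 2 ≤ I ⊔ N * J * J :=
    calc J ^ 2 = (I ⊔ N * J) * J := by rw [sq, ← hgen]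
      _ = I * J ⊔ N * J * J := sup_mul _ _ _
      _ ≤ I ⊔ N * J * J := sup_le_sup_right mul_le_left _
  calc J = I ⊔ N * J := hgen
    _ ≤ I ⊔ (I ⊔ N * J * J) := sup_le_sup_left (hNJ.trans hsq) _
    _ = I ⊔ N * J * J := by rw [← sup_assoc, sup_idem]

end Ideal

theorem generators_plus_one_element_general {R : Type} [CommRing R] [IsNoetherianRing R]
    (d : ℕ)
    (J N : Ideal R)
    (a : Fin d → R) (ha : ∀ i, a i ∈ J)
    (hNJ : N * J ≤ J ^ 2)
    (hgen : J = Ideal.span (Set.range a) ⊔ N * J) :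
    ∃ c ∈ N * J, J = Ideal.span (insert c (Set.range a)) := by
  have hIJ : Ideal.span (Set.range a) ≤ J := Ideal.span_le.mpr (Set.range_subset_iff.mpr ha)
  obtain ⟨c, hc, hJ⟩ := Ideal.exists_mem_eq_sup_span_singleton_of_le_sup_mul
    (IsNoetherian.noetherian J) hIJ (hNJ.trans (Ideal.pow_le_self two_ne_zero))
    (Ideal.le_sup_mul_mul_of_eq_sup_mul hgen hNJ)
  exact ⟨c, hc, by rw [Ideal.span_insert, sup_comm]; exact hJ⟩

/-- If `a₁, …, a_d ∈ J` generate `J` modulo `N·J` where `N·J ⊆ J²`, then there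
is a single element `c ∈ N·J` such that `J = (a₁, …, a_d, c)`. -/
theorem generators_plus_one_element {R : Type} [CommRing R] [IsNoetherianRing R]
    (d : ℕ) (hd : 2 ≤ d) (hdim : ringKrullDim R = d)
    (J N : Ideal R) (hht : idealHeight J = d)
    (a : Fin d → R) (ha : ∀ i, a i ∈ J)
    (hNJ : N * J ≤ J ^ 2)
    (hgen : J = Ideal.span (Set.range a) ⊔ N * J) :
    ∃ c ∈ N * J, J = Ideal.span (insert c (Set.range a)) :=
  generators_plus_one_element_general d J N a ha hNJ hgen
end

section
/- Let G be a free abelian group with basis B = (e_i)_{i∈I}, and let ∼ be an equivalence relation on B. Call x ∈ G 'nicely reduced' if x = e_1 + ⋯ + e_r with e_i ≁ e_j for i ≠ j. Let S ⊆ G satisfy: (1) every element of S is nicely reduced; (2) if x, y, x+y are all nicely reduced and two of them lie in S, then so does the third; (3) for every nicely reduced x ∈ G∖S and every finite J ⊆ I there is y ∈ G that is nicely reduced, with x + y ∈ S and y + e_j nicely reduced for all j ∈ J. Let H be the subgroup generated by S. Then every nicely reduced element of H lies in S. -/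
/-!
Call two finite sets of basis elements *apart* when no element of one is equivalent to an element
of the other; for nicely reduced `u`, `v` this is exactly what makes `u + v` nicely reduced.
Condition (3) provides, for every nicely reduced `u`, a complement `w` with `u + w ∈ S` that is
apart from any prescribed finite set. Identify nicely reduced elements that share a complement.
Adding representatives that are apart turns the classes into a commutative monoid, in which
complements are inverses and the class of `u` vanishes iff `u ∈ S`. Sending `e_i` to its class
gives a homomorphism from `G` to the units of this monoid; it kills `S`, hence the subgroup
generated by `S`, and sends a nicely reduced `x` to its class, which therefore vanishes.
-/

open Finsupp

section

variable {ι : Type*}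

def NicelyReduced (r : ι → ι → Prop) (x : ι →₀ ℤ) : Prop :=
  ∃ s : Finset ι, x = ∑ i ∈ s, single i 1 ∧ (s : Set ι).Pairwise fun i j => ¬ r i j

def Apart (r : ι → ι → Prop) (s t : Finset ι) : Prop := ∀ i ∈ s, ∀ j ∈ t, ¬ r i j

section Apart

variable {r : ι → ι → Prop} {s s' t t' : Finset ι}

theorem Apart.mono (h : Apart r s t) (hs : s' ⊆ s) (ht : t' ⊆ t) : Apart r s' t' :=
  fun i hi j hj => h i (hs hi) j (ht hj)

theorem Apart.symm [Std.Symm r] (h : Apart r s t) : Apart r t s :=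
  fun i hi j hj hij => h j hj i hi (symm_of r hij)

theorem Apart.disjoint [Std.Refl r] (h : Apart r s t) : Disjoint s t :=
  Finset.disjoint_left.2 fun i hs ht => h i hs i ht (refl_of r i)

@[simp]
theorem apart_union_left [DecidableEq ι] :
    Apart r (s ∪ s') t ↔ Apart r s t ∧ Apart r s' t := by
  simp only [Apart, Finset.mem_union, or_imp, forall_and]

@[simp]
theorem apart_union_right [DecidableEq ι] :
    Apart r s (t ∪ t') ↔ Apart r s t ∧ Apart r s t' := by
  simp only [Apart, Finset.mem_union, or_imp, forall_and]

theorem Apart.support_add_left {x y : ι →₀ ℤ} (hx : Apart r x.support t)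
    (hy : Apart r y.support t) : Apart r (x + y).support t := by
  classical
  exact (apart_union_left.2 ⟨hx, hy⟩).mono support_add subset_rfl

theorem Apart.support_add_right {x y : ι →₀ ℤ} (hx : Apart r s x.support)
    (hy : Apart r s y.support) : Apart r s (x + y).support := by
  classical
  exact (apart_union_right.2 ⟨hx, hy⟩).mono subset_rfl support_add

end Apart

theorem sum_single_one_apply [DecidableEq ι] (s : Finset ι) (j : ι) :
    (∑ i ∈ s, single i (1 : ℤ)) j = if j ∈ s then 1 else 0 := by
  simp [finsetSum_apply, single_apply]

@[simp]
theorem support_sum_single_one (s : Finset ι) : (∑ i ∈ s, single i (1 : ℤ)).support = s := by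
  classical
  ext j
  simp [sum_single_one_apply]

namespace NicelyReduced

variable {r : ι → ι → Prop} {x y : ι →₀ ℤ}

theorem zero : NicelyReduced r 0 := ⟨∅, by simp, by simp⟩

theorem single (i : ι) : NicelyReduced r (single i 1) := ⟨{i}, by simp, by simp⟩

theorem eq_one_of_mem_support (hx : NicelyReduced r x) {i : ι} (hi : i ∈ x.support) :
    x i = 1 := by
  classical
  obtain ⟨s, rfl, -⟩ := hx
  simp only [support_sum_single_one] at hi
  simp [sum_single_one_apply, hi]

theorem pairwise (hx : NicelyReduced r x) :
    (x.support : Set ι).Pairwise fun i j => ¬ r i j := by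
  obtain ⟨s, rfl, hs⟩ := hx
  simpa using hs

theorem add [Std.Refl r] [Std.Symm r] (hx : NicelyReduced r x) (hy : NicelyReduced r y)
    (h : Apart r x.support y.support) : NicelyReduced r (x + y) := by
  classical
  obtain ⟨s, rfl, hs⟩ := hx
  obtain ⟨t, rfl, ht⟩ := hy
  simp only [support_sum_single_one] at h
  refine ⟨s ∪ t, (Finset.sum_union h.disjoint).symm, ?_⟩
  rw [Finset.coe_union, Set.pairwise_union]
  exact ⟨hs, ht, fun i hi j hj _ => ⟨h i hi j hj, h.symm j hj i hi⟩⟩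

theorem apply_eq_zero_or_one (hx : NicelyReduced r x) (i : ι) : x i = 0 ∨ x i = 1 := by
  by_cases hi : x i = 0
  · exact .inl hi
  · exact .inr (hx.eq_one_of_mem_support (mem_support_iff.2 hi))

theorem apart_of_add (hx : NicelyReduced r x) (hy : NicelyReduced r y)
    (hxy : NicelyReduced r (x + y)) : Apart r x.support y.support := by
  have key : ∀ {x y : ι →₀ ℤ}, NicelyReduced r x → NicelyReduced r y →
      NicelyReduced r (x + y) → ∀ i ∈ x.support, y i = 0 ∧ i ∈ (x + y).support := by
    intro x y hx hy hxy i hi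
    have hxi := hx.eq_one_of_mem_support hi
    have hyi := hy.apply_eq_zero_or_one i
    have hxyi := hxy.apply_eq_zero_or_one i
    rw [Finsupp.add_apply] at hxyi
    rw [mem_support_iff, Finsupp.add_apply]
    omega
  intro i hi j hj
  obtain ⟨hyi, hi'⟩ := key hx hy hxy i hi
  obtain ⟨-, hj'⟩ := key hy hx (by rwa [add_comm]) j hj
  rw [add_comm] at hj'
  exact hxy.pairwise hi' hj' (by rintro rfl; exact mem_support_iff.1 hj hyi)

end NicelyReduced

structure IsAdmissible (r : ι → ι → Prop) (S : Set (ι →₀ ℤ)) : Prop where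
  nicelyReduced : ∀ ⦃x⦄, x ∈ S → NicelyReduced r x
  add_mem : ∀ ⦃x y⦄, x ∈ S → y ∈ S → NicelyReduced r (x + y) → x + y ∈ S
  mem_of_add_mem : ∀ ⦃x y⦄, x ∈ S → NicelyReduced r y → x + y ∈ S → y ∈ S
  exists_add_mem : ∀ ⦃x⦄, NicelyReduced r x → x ∉ S → ∀ J : Finset ι,
    ∃ y, NicelyReduced r y ∧ x + y ∈ S ∧ Apart r J y.support

def SharesComplement (r : ι → ι → Prop) (S : Set (ι →₀ ℤ)) (u v : ι →₀ ℤ) : Prop :=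
  ∃ w, NicelyReduced r w ∧ u + w ∈ S ∧ v + w ∈ S

namespace IsAdmissible

variable {r : ι → ι → Prop} {S : Set (ι →₀ ℤ)} {u v x y : ι →₀ ℤ}

theorem exists_apart_add_mem (hS : IsAdmissible r S) (hu : NicelyReduced r u)
    (J : Finset ι) : ∃ w, NicelyReduced r w ∧ u + w ∈ S ∧ Apart r J w.support := by
  by_cases huS : u ∈ S
  · exact ⟨0, .zero, by simpa using huS, by simp [Apart]⟩
  · exact hS.exists_add_mem hu huS J

theorem add_mem_of_apart [Std.Refl r] [Std.Symm r] (hS : IsAdmissible r S) (hx : x ∈ S)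
    (hy : y ∈ S) (h : Apart r x.support y.support) : x + y ∈ S :=
  hS.add_mem hx hy ((hS.nicelyReduced hx).add (hS.nicelyReduced hy) h)

theorem add_mem_of_zigzag [Std.Refl r] [Std.Symm r] (hS : IsAdmissible r S)
    {p q s t : ι →₀ ℤ} (hp : NicelyReduced r p) (hq : NicelyReduced r q)
    (hs : NicelyReduced r s) (ht : NicelyReduced r t)
    (hpq : p + q ∈ S) (hqs : q + s ∈ S) (hst : s + t ∈ S) (hps : Apart r p.support s.support)
    (hpt : Apart r p.support t.support) (hqt : Apart r q.support t.support) : p + t ∈ S := by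
  have hqs' := hq.apart_of_add hs (hS.nicelyReduced hqs)
  have hst' := hs.apart_of_add ht (hS.nicelyReduced hst)
  have hsum : (p + q) + (s + t) ∈ S := hS.add_mem_of_apart hpq hst <|
    (hps.support_add_right hpt).support_add_left (hqs'.support_add_right hqt)
  rw [show p + q + (s + t) = q + s + (p + t) by abel] at hsum
  exact hS.mem_of_add_mem hqs (hp.add ht hpt) hsum

theorem sharesComplement_refl (hS : IsAdmissible r S) (hu : NicelyReduced r u) :
    SharesComplement r S u u :=
  let ⟨w, hw, huw, _⟩ := hS.exists_apart_add_mem hu ∅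
  ⟨w, hw, huw, huw⟩

theorem sharesComplement_zero_iff (hS : IsAdmissible r S) (hu : NicelyReduced r u) :
    SharesComplement r S u 0 ↔ u ∈ S := by
  constructor
  · rintro ⟨w, -, huw, hw⟩
    rw [zero_add] at hw
    exact hS.mem_of_add_mem hw hu (by rwa [add_comm])
  · intro huS
    obtain ⟨w, hw, huw, -⟩ := hS.exists_apart_add_mem hu ∅
    exact ⟨w, hw, huw, by rw [zero_add]; exact hS.mem_of_add_mem huS hw huw⟩

end IsAdmissible

namespace SharesComplement

variable {r : ι → ι → Prop} {S : Set (ι →₀ ℤ)} {u v : ι →₀ ℤ}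

theorem symm (h : SharesComplement r S u v) : SharesComplement r S v u :=
  let ⟨w, hw, hu, hv⟩ := h
  ⟨w, hw, hv, hu⟩

theorem exists_apart [Std.Refl r] [Std.Symm r] (hS : IsAdmissible r S)
    (huv : SharesComplement r S u v) (hu : NicelyReduced r u) (hv : NicelyReduced r v)
    (J : Finset ι) :
    ∃ w, NicelyReduced r w ∧ u + w ∈ S ∧ v + w ∈ S ∧ Apart r J w.support := by
  classical
  obtain ⟨w₀, hw₀, huw₀, hvw₀⟩ := huv
  obtain ⟨s, hs, hw₀s, hJs⟩ :=
    hS.exists_apart_add_mem hw₀ (J ∪ u.support ∪ v.support ∪ w₀.support)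
  obtain ⟨t, ht, hst, hJt⟩ :=
    hS.exists_apart_add_mem hs (J ∪ u.support ∪ v.support ∪ w₀.support)
  simp only [apart_union_left] at hJs hJt
  exact ⟨t, ht,
    hS.add_mem_of_zigzag hu hw₀ hs ht huw₀ hw₀s hst hJs.1.1.2 hJt.1.1.2 hJt.2,
    hS.add_mem_of_zigzag hv hw₀ hs ht hvw₀ hw₀s hst hJs.1.2 hJt.1.2 hJt.2, hJt.1.1.1⟩

theorem trans [Std.Refl r] [Std.Symm r] (hS : IsAdmissible r S)
    {u v w : ι →₀ ℤ} (huv : SharesComplement r S u v) (hvw : SharesComplement r S v w)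
    (hu : NicelyReduced r u) (hv : NicelyReduced r v) (hw : NicelyReduced r w) :
    SharesComplement r S u w := by
  classical
  obtain ⟨z₁, hz₁, huz₁, hvz₁⟩ := huv
  obtain ⟨z₂, hz₂, hvz₂, hwz₂, hJz₂⟩ := hvw.exists_apart hS hv hw (u.support ∪ z₁.support)
  have hz : SharesComplement r S z₁ z₂ := ⟨v, hv, by rwa [add_comm], by rwa [add_comm]⟩
  obtain ⟨ζ, hζ, hz₁ζ, hz₂ζ, huζ⟩ := hz.exists_apart hS hz₁ hz₂ u.support
  rw [apart_union_left] at hJz₂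
  exact ⟨z₂, hz₂, hS.add_mem_of_zigzag hu hz₁ hζ hz₂ huz₁ hz₁ζ (by rwa [add_comm]) huζ
    hJz₂.1 hJz₂.2, hwz₂⟩

theorem add [Std.Refl r] [Std.Symm r] (hS : IsAdmissible r S)
    {u u' v v' : ι →₀ ℤ} (hu : SharesComplement r S u u') (hv : SharesComplement r S v v')
    (hu₀ : NicelyReduced r u) (hu₀' : NicelyReduced r u') (hv₀ : NicelyReduced r v)
    (hv₀' : NicelyReduced r v') (huv : Apart r u.support v.support)
    (huv' : Apart r u'.support v'.support) : SharesComplement r S (u + v) (u' + v') := by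
  classical
  obtain ⟨a, ha, hua, hu'a, hJa⟩ :=
    hu.exists_apart hS hu₀ hu₀' (v.support ∪ v'.support)
  obtain ⟨b, hb, hvb, hv'b, hJb⟩ :=
    hv.exists_apart hS hv₀ hv₀' (u.support ∪ u'.support ∪ a.support)
  simp only [apart_union_left] at hJa hJb
  refine ⟨a + b, ha.add hb hJb.2, ?_, ?_⟩
  · rw [add_add_add_comm]
    exact hS.add_mem_of_apart hua hvb <|
      (huv.support_add_right hJb.1.1).support_add_left (hJa.1.symm.support_add_right hJb.2)
  · rw [add_add_add_comm]
    exact hS.add_mem_of_apart hu'a hv'b <|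
      (huv'.support_add_right hJb.1.2).support_add_left (hJa.2.symm.support_add_right hJb.2)

end SharesComplement

namespace IsAdmissible

variable {r : ι → ι → Prop} [Std.Refl r] [Std.Symm r] {S : Set (ι →₀ ℤ)}

def sharesComplementSetoid (hS : IsAdmissible r S) : Setoid {x // NicelyReduced r x} where
  r u v := SharesComplement r S u v
  iseqv := ⟨fun u => hS.sharesComplement_refl u.2, .symm,
    fun {u v w} huv hvw => huv.trans hS hvw u.2 v.2 w.2⟩

def Classes (hS : IsAdmissible r S) : Type _ := Quotient hS.sharesComplementSetoid

variable (hS : IsAdmissible r S)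

def classOf (x : ι →₀ ℤ) (hx : NicelyReduced r x) : hS.Classes := Quotient.mk _ ⟨x, hx⟩

theorem classOf_eq_classOf {x y : ι →₀ ℤ} {hx : NicelyReduced r x} {hy : NicelyReduced r y} :
    hS.classOf x hx = hS.classOf y hy ↔ SharesComplement r S x y :=
  Quotient.eq (r := hS.sharesComplementSetoid)

theorem exists_classOf_eq_apart (a : hS.Classes) (J : Finset ι) :
    ∃ u : {x // NicelyReduced r x}, hS.classOf u.1 u.2 = a ∧ Apart r J u.1.support := by
  induction a using Quotient.inductionOn with
  | h u =>
    obtain ⟨w, hw, huw, -⟩ := hS.exists_apart_add_mem u.2 ∅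
    obtain ⟨x, hx, hwx, hJx⟩ := hS.exists_apart_add_mem hw J
    exact ⟨⟨x, hx⟩, (hS.classOf_eq_classOf).2 ⟨w, hw, by rwa [add_comm], huw⟩, hJx⟩

noncomputable def repApart (a : hS.Classes) (J : Finset ι) : {x // NicelyReduced r x} :=
  (hS.exists_classOf_eq_apart a J).choose

theorem classOf_repApart (a : hS.Classes) (J : Finset ι) :
    hS.classOf (hS.repApart a J).1 (hS.repApart a J).2 = a :=
  (hS.exists_classOf_eq_apart a J).choose_spec.1

theorem apart_repApart (a : hS.Classes) (J : Finset ι) :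
    Apart r J (hS.repApart a J).1.support :=
  (hS.exists_classOf_eq_apart a J).choose_spec.2

theorem sharesComplement_repApart {x : ι →₀ ℤ} (hx : NicelyReduced r x) (J : Finset ι) :
    SharesComplement r S (hS.repApart (hS.classOf x hx) J).1 x :=
  (hS.classOf_eq_classOf).1 (hS.classOf_repApart _ J)

/-- The sum of two classes is the class of `u + v` for representatives `u`, `v` that are apart;
`SharesComplement.add` makes this independent of the choice. -/
noncomputable instance : Add hS.Classes where
  add a := Quotient.lift
    (fun v => hS.classOf (hS.repApart a v.1.support + v.1)
      ((hS.repApart a _).2.add v.2 (hS.apart_repApart a _).symm))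
    fun v v' hvv' => (hS.classOf_eq_classOf).2 <| by
      have hrep : SharesComplement r S (hS.repApart a v.1.support).1
          (hS.repApart a v'.1.support).1 :=
        (hS.classOf_eq_classOf).1
          ((hS.classOf_repApart a _).trans (hS.classOf_repApart a _).symm)
      exact hrep.add hS hvv' (hS.repApart a _).2 (hS.repApart a _).2 v.2 v'.2
        (hS.apart_repApart a _).symm (hS.apart_repApart a _).symm

theorem classOf_add_classOf {x y : ι →₀ ℤ} (hx : NicelyReduced r x) (hy : NicelyReduced r y)
    (h : Apart r x.support y.support) :
    hS.classOf x hx + hS.classOf y hy = hS.classOf (x + y) (hx.add hy h) :=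
  (hS.classOf_eq_classOf).2 <| (hS.sharesComplement_repApart hx _).add hS
    (hS.sharesComplement_refl hy) (hS.repApart _ _).2 hx hy hy (hS.apart_repApart _ _).symm h

noncomputable instance : Zero hS.Classes := ⟨hS.classOf 0 .zero⟩

theorem classOf_eq_zero_iff {x : ι →₀ ℤ} (hx : NicelyReduced r x) :
    hS.classOf x hx = 0 ↔ x ∈ S :=
  (hS.classOf_eq_classOf).trans (hS.sharesComplement_zero_iff hx)

noncomputable instance : AddCommMonoid hS.Classes where
  add_assoc a b c := by
    classical
    obtain ⟨⟨z, hz⟩, rfl, -⟩ := hS.exists_classOf_eq_apart c ∅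
    obtain ⟨⟨y, hy⟩, rfl, hzy⟩ := hS.exists_classOf_eq_apart b z.support
    obtain ⟨⟨x, hx⟩, rfl, hyzx⟩ := hS.exists_classOf_eq_apart a (y.support ∪ z.support)
    rw [apart_union_left] at hyzx
    rw [hS.classOf_add_classOf hx hy hyzx.1.symm,
      hS.classOf_add_classOf _ hz (hyzx.2.symm.support_add_left hzy.symm),
      hS.classOf_add_classOf hy hz hzy.symm,
      hS.classOf_add_classOf hx _ (hyzx.1.symm.support_add_right hyzx.2.symm)]
    simp only [add_assoc]
  zero_add a := by
    obtain ⟨⟨x, hx⟩, rfl, -⟩ := hS.exists_classOf_eq_apart a ∅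
    refine (hS.classOf_add_classOf .zero hx (by simp [Apart])).trans ?_
    simp only [zero_add]
  add_zero a := by
    obtain ⟨⟨x, hx⟩, rfl, -⟩ := hS.exists_classOf_eq_apart a ∅
    refine (hS.classOf_add_classOf hx .zero (by simp [Apart])).trans ?_
    simp only [add_zero]
  add_comm a b := by
    obtain ⟨⟨y, hy⟩, rfl, -⟩ := hS.exists_classOf_eq_apart b ∅
    obtain ⟨⟨x, hx⟩, rfl, hyx⟩ := hS.exists_classOf_eq_apart a y.support
    rw [hS.classOf_add_classOf hx hy hyx.symm, hS.classOf_add_classOf hy hx hyx]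
    congr 1
    exact add_comm x y
  nsmul := nsmulRec

theorem isAddUnit_classOf {x : ι →₀ ℤ} (hx : NicelyReduced r x) :
    IsAddUnit (hS.classOf x hx) := by
  obtain ⟨w, hw, hxw, hJw⟩ := hS.exists_apart_add_mem hx x.support
  exact .of_add_eq_zero (hS.classOf w hw)
    ((hS.classOf_add_classOf hx hw hJw).trans ((hS.classOf_eq_zero_iff _).2 hxw))

/-- Every class is invertible, so no negation on `Classes` is needed to extend `e_i ↦ [e_i]`. -/
noncomputable def toUnits : (ι →₀ ℤ) →+ AddUnits hS.Classes :=
  Finsupp.liftAddHom fun i => zmultiplesHom _ (hS.isAddUnit_classOf (.single i)).addUnit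

theorem coe_toUnits_single (i : ι) :
    (hS.toUnits (single i 1) : hS.Classes) = hS.classOf _ (.single i) := by
  simp [toUnits]

theorem coe_toUnits {x : ι →₀ ℤ} (hx : NicelyReduced r x) :
    (hS.toUnits x : hS.Classes) = hS.classOf x hx := by
  classical
  obtain ⟨s, rfl, hs⟩ := hx
  induction s using Finset.induction_on with
  | empty => simp only [Finset.sum_empty, map_zero, AddUnits.val_zero]; rfl
  | insert i s hi ih =>
    rw [Finset.coe_insert, Set.pairwise_insert] at hs
    simp only [Finset.sum_insert hi, map_add, AddUnits.val_add, coe_toUnits_single, ih hs.1]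
    refine hS.classOf_add_classOf _ _ ?_
    simpa [Apart] using fun j hj => (hs.2 j hj (by rintro rfl; exact hi hj)).1

theorem mem_of_mem_closure (hS : IsAdmissible r S) {x : ι →₀ ℤ}
    (hx : x ∈ AddSubgroup.closure S) (hxNR : NicelyReduced r x) : x ∈ S := by
  have hS_ker : AddSubgroup.closure S ≤ hS.toUnits.ker := by
    refine (AddSubgroup.closure_le _).2 fun s hs => AddUnits.ext ?_
    rw [coe_toUnits _ (hS.nicelyReduced hs), AddUnits.val_zero, classOf_eq_zero_iff]
    exact hs
  have hx0 : (hS.toUnits x : hS.Classes) = 0 := by rw [hS_ker hx]; rfl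
  rwa [coe_toUnits _ hxNR, classOf_eq_zero_iff] at hx0

end IsAdmissible

end

/-- The combinatorial lemma underlying vanishing criteria in Euler class group
theory. `G = ι →₀ ℤ` is the free abelian group on `ι`, `r` is an equivalence
relation on the basis, `NR` is the set of "nicely reduced" elements (sums of
distinct pairwise inequivalent basis elements), and `S` satisfies the three
listed conditions. Then every nicely reduced element of the subgroup generated
by `S` lies in `S`. -/
theorem nicely_reduced_in_S {ι : Type} (r : ι → ι → Prop) (hr : Equivalence r)
    (S NR : Set (ι →₀ ℤ))
    (hNR : ∀ x, x ∈ NR ↔ ∃ s : Finset ι,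
      x = ∑ i ∈ s, Finsupp.single i 1 ∧
      ∀ i ∈ s, ∀ j ∈ s, i ≠ j → ¬ r i j)
    (h1 : S ⊆ NR)
    (h2 : ∀ x y, x ∈ NR → y ∈ NR → x + y ∈ NR →
      ((x ∈ S ∧ y ∈ S) → x + y ∈ S) ∧
      ((x ∈ S ∧ x + y ∈ S) → y ∈ S) ∧
      ((y ∈ S ∧ x + y ∈ S) → x ∈ S))
    (h3 : ∀ x ∈ NR, x ∉ S → ∀ J : Finset ι,
      ∃ y ∈ NR, x + y ∈ S ∧ ∀ j ∈ J, y + Finsupp.single j 1 ∈ NR)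
    (x : ι →₀ ℤ) (hx : x ∈ AddSubgroup.closure S) (hxNR : x ∈ NR) :
    x ∈ S := by
  obtain rfl : NR = {x | NicelyReduced r x} := Set.ext hNR
  have : Std.Refl r := ⟨hr.refl⟩
  have : Std.Symm r := ⟨fun _ _ => hr.symm⟩
  have hS : IsAdmissible r S :=
    { nicelyReduced := h1
      add_mem := fun x y hx hy hxy => (h2 x y (h1 hx) (h1 hy) hxy).1 ⟨hx, hy⟩
      mem_of_add_mem := fun x y hx hy hxy => (h2 x y (h1 hx) hy (h1 hxy)).2.1 ⟨hx, hxy⟩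
      exists_add_mem := fun x hx hxS J => by
        obtain ⟨y, hy, hxy, hyJ⟩ := h3 x hx hxS J
        refine ⟨y, hy, hxy, fun j hj => ?_⟩
        have hjy : NicelyReduced r (single j 1 + y) := by rw [add_comm]; exact hyJ j hj
        exact (NicelyReduced.single j).apart_of_add hy hjy j (by simp) }
  exact hS.mem_of_mem_closure hx hxNR
end

section
/- Let R be a commutative Noetherian ring of dimension d, J ⊆ R an ideal of height d generated modulo J² by b₁,…,b_d, and suppose J = (c₁,…,c_d) with b_i ≡ c_i mod J². Then there exist λ₁,…,λ_{d-1} ∈ R such that, setting c'_i = c_i + λ_i c_d for i < d, one has dim(R/(c'₁,…,c'_{d-1})) ≤ 1 and J = (c'₁,…,c'_{d-1}, c_d) with b_i + λ_i b_d ≡ c'_i mod J². -/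
namespace Order

theorem krullDim_le_of_forall_le_height {α : Type*} [Preorder α] (S : Set α) {m k : ℕ}
    (hS : ∀ y ∈ S, (m : ℕ∞) ≤ height y) (hα : krullDim α ≤ (m + k : ℕ)) :
    krullDim S ≤ k := by
  refine iSup_le fun l => ?_
  obtain ⟨s, hs_last, hs_length⟩ := exists_series_of_le_height (l.head : α) (hS _ l.head.2)
  have hlen : s.length + l.length ≤ m + k := by
    exact_mod_cast (LTSeries.length_le_krullDim
      (s.smash (l.map Subtype.val (Subtype.strictMono_coe _)) hs_last)).trans hα
  exact_mod_cast (by omega : l.length ≤ k)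

end Order

section

variable {R : Type*} [CommRing R]

theorem ringKrullDim_quotient_le_of_le_height {I : Ideal R} {m k : ℕ} (hI : (m : ℕ∞) ≤ I.height)
    (hR : ringKrullDim R ≤ (m + k : ℕ)) : ringKrullDim (R ⧸ I) ≤ k := by
  rw [ringKrullDim_quotient]
  refine Order.krullDim_le_of_forall_le_height _ (fun p hp => ?_) hR
  rw [← PrimeSpectrum.height_eq_orderHeight]
  exact hI.trans (Ideal.height_mono (by simpa using hp))

/-- Remove a prime `p` minimal in `S`; if the `t` found for the others fails at `p`, add to it an
element lying in all the others but not in `p`. -/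
theorem Ideal.exists_add_mul_notMem (a b : R) (S : Finset (Ideal R))
    (hS : ∀ p ∈ S, p.IsPrime) (hb : ∀ p ∈ S, b ∉ p) : ∃ t : R, ∀ p ∈ S, a + t * b ∉ p := by
  classical
  induction S using Finset.strongInduction with
  | _ S ih =>
  rcases S.eq_empty_or_nonempty with rfl | hne
  · exact ⟨0, by simp⟩
  obtain ⟨p, hp, hp_min⟩ := S.exists_minimal hne
  have hp_prime := hS p hp
  obtain ⟨t, ht⟩ := ih (S.erase p) (Finset.erase_ssubset hp)
    (fun q hq => hS q (Finset.mem_of_mem_erase hq)) (fun q hq => hb q (Finset.mem_of_mem_erase hq))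
  by_cases hpt : a + t * b ∈ p
  · obtain ⟨u, hu, hup⟩ : ∃ u ∈ (S.erase p).inf id, u ∉ p := by
      by_contra! h
      obtain ⟨q, hq, hqp⟩ := hp_prime.inf_le'.1 h
      exact Finset.ne_of_mem_erase hq (le_antisymm hqp (hp_min (Finset.mem_of_mem_erase hq) hqp))
    refine ⟨t + u, fun q hq hmem => ?_⟩
    rw [show a + (t + u) * b = a + t * b + u * b by ring] at hmem
    rcases eq_or_ne q p with rfl | hqp
    · have hub : u * b ∈ q := (Submodule.add_mem_iff_right q hpt).1 hmem
      exact (hp_prime.mem_or_mem hub).elim hup (hb q hp)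
    · have hq' := Finset.mem_erase.2 ⟨hqp, hq⟩
      have hub : u * b ∈ q := q.mul_mem_right b ((Finset.inf_le hq' : _ ≤ id q) hu)
      exact ht q hq' ((Submodule.add_mem_iff_left q hub).1 hmem)
  · refine ⟨t, fun q hq => ?_⟩
    rcases eq_or_ne q p with rfl | hqp
    · exact hpt
    · exact ht q (Finset.mem_erase.2 ⟨hqp, hq⟩)

theorem exists_add_mul_succ_le_height [IsNoetherianRing R] {I : Ideal R} {x : R} {k : ℕ}
    (hI : ∀ p : Ideal R, p.IsPrime → I ≤ p → x ∉ p → (k : ℕ∞) ≤ p.height) (a : R) :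
    ∃ t : R, ∀ p : Ideal R, p.IsPrime → I ⊔ Ideal.span {a + t * x} ≤ p → x ∉ p →
      ((k + 1 : ℕ) : ℕ∞) ≤ p.height := by
  have hfin : {p | p ∈ I.minimalPrimes ∧ x ∉ p}.Finite :=
    (I.finite_minimalPrimes_of_isNoetherianRing R).subset fun _ hp => hp.1
  obtain ⟨t, ht⟩ := Ideal.exists_add_mul_notMem a x hfin.toFinset
    (fun p hp => (hfin.mem_toFinset.1 hp).1.isPrime) (fun p hp => (hfin.mem_toFinset.1 hp).2)
  refine ⟨t, fun q hq hIq hxq => ?_⟩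
  rw [sup_le_iff, Ideal.span_singleton_le_iff_mem] at hIq
  obtain ⟨p, hp, hpq⟩ := Ideal.exists_minimalPrimes_le hIq.1
  have hxp : x ∉ p := fun h => hxq (hpq h)
  have hpq' : p < q :=
    lt_of_le_of_ne hpq fun h => ht p (hfin.mem_toFinset.2 ⟨hp, hxp⟩) (h ▸ hIq.2)
  have := hp.isPrime
  calc ((k + 1 : ℕ) : ℕ∞) = k + 1 := by push_cast; rfl
    _ ≤ p.height + 1 := by gcongr; exact hI p this hp.1.2 hxp
    _ ≤ q.height := Ideal.height_add_one_le_of_lt_of_isPrime hpq'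

theorem exists_add_mul_le_height [IsNoetherianRing R] (x : R) {k : ℕ} (a : Fin k → R) :
    ∃ lam : Fin k → R, ∀ p : Ideal R, p.IsPrime →
      Ideal.span (Set.range fun i => a i + lam i * x) ≤ p → x ∉ p → (k : ℕ∞) ≤ p.height := by
  induction k with
  | zero => exact ⟨Fin.elim0, fun p _ _ _ => by simp⟩
  | succ k ih =>
    obtain ⟨lam, hlam⟩ := ih (Fin.init a)
    obtain ⟨t, ht⟩ := exists_add_mul_succ_le_height hlam (a (Fin.last k))
    refine ⟨Fin.snoc (α := fun _ => R) lam t, fun p hp hle hxp => ht p hp ?_ hxp⟩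
    have : (fun i => a i + Fin.snoc (α := fun _ => R) lam t i * x) =
        Fin.snoc (fun i => Fin.init a i + lam i * x) (a (Fin.last k) + t * x) := by
      ext i
      induction i using Fin.lastCases <;> simp [Fin.init]
    rwa [this, Fin.range_snoc, Ideal.span_insert, sup_comm] at hle

theorem Ideal.span_insert_range_add_mul {ι : Type*} (x : R) (a lam : ι → R) :
    Ideal.span (insert x (Set.range fun i => a i + lam i * x)) =
      Ideal.span (insert x (Set.range a)) := by
  have hx {s : Set R} : x ∈ Ideal.span (insert x s) := Ideal.subset_span (Set.mem_insert _ _)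
  have hs {s : Set R} {y : R} (hy : y ∈ s) : y ∈ Ideal.span (insert x s) :=
    Ideal.subset_span (Set.mem_insert_of_mem _ hy)
  apply le_antisymm <;>
    refine Ideal.span_le.2 (Set.insert_subset_iff.2 ⟨hx, Set.range_subset_iff.2 fun i => ?_⟩)
  · exact add_mem (hs ⟨i, rfl⟩) (Ideal.mul_mem_left _ _ hx)
  · rw [show a i = a i + lam i * x - lam i * x by ring]
    exact sub_mem (hs ⟨i, rfl⟩) (Ideal.mul_mem_left _ _ hx)

end

theorem idealHeight_le_height {R : Type} [CommRing R] {J p : Ideal R} [hp : p.IsPrime]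
    (h : J ≤ p) : idealHeight J ≤ p.height :=
  (PrimeSpectrum.height_eq_orderHeight ⟨p, hp⟩).symm ▸
    iInf_le (fun q : {q : PrimeSpectrum R // J ≤ q.asIdeal} => Order.height q.val) ⟨⟨p, hp⟩, h⟩

theorem general_position_general {R : Type} [CommRing R] [IsNoetherianRing R]
    (n : ℕ) (hdim : ringKrullDim R = (n + 1 : ℕ))
    (J : Ideal R) (hht : idealHeight J = (n + 1 : ℕ))
    (b c : Fin (n + 1) → R)
    (hc : J = Ideal.span (Set.range c))
    (hbc : ∀ i, b i - c i ∈ J ^ 2) :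
    ∃ lam : Fin n → R,
      ringKrullDim (R ⧸ Ideal.span
        (Set.range (fun i : Fin n => c i.castSucc + lam i * c (Fin.last n)))) ≤ 1 ∧
      J = Ideal.span (insert (c (Fin.last n))
        (Set.range (fun i : Fin n => c i.castSucc + lam i * c (Fin.last n)))) ∧
      ∀ i : Fin n,
        (b i.castSucc + lam i * b (Fin.last n)) -
          (c i.castSucc + lam i * c (Fin.last n)) ∈ J ^ 2 := by
  obtain ⟨lam, hlam⟩ := exists_add_mul_le_height (c (Fin.last n)) (Fin.init c)
  have hJ : J = Ideal.span (insert (c (Fin.last n))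
      (Set.range fun i : Fin n => c i.castSucc + lam i * c (Fin.last n))) := by
    rw [Ideal.span_insert_range_add_mul, hc, ← Fin.range_snoc]
    exact congrArg (Ideal.span ∘ Set.range) (Fin.snoc_init_self c).symm
  refine ⟨lam, ringKrullDim_quotient_le_of_le_height (m := n) (k := 1) ?_ hdim.le, hJ, fun i => ?_⟩
  · rw [Ideal.height_eq_inf_minimalPrimes]
    refine le_iInf₂ fun p hp => ?_
    have := hp.isPrime
    by_cases hxp : c (Fin.last n) ∈ p
    · have hJp : J ≤ p := hJ ▸ Ideal.span_le.2 (Set.insert_subset hxp (Ideal.span_le.1 hp.1.2))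
      calc (n : ℕ∞) ≤ idealHeight J := by rw [hht]; exact_mod_cast n.le_succ
        _ ≤ p.height := idealHeight_le_height hJp
    · exact hlam p this hp.1.2 hxp
  · convert add_mem (hbc i.castSucc) (Ideal.mul_mem_left _ (lam i) (hbc (Fin.last n))) using 1
    ring

/-- General position: if `J = (c₁, …, c_d)` has height `d = dim R` and
`b_i ≡ c_i mod J²` generate `J` modulo `J²`, then adding suitable multiples of
the last generator to the others one may assume that the first `d - 1` modified
generators `c'_i = c_i + λ_i c_d` generate an ideal with `dim R/(c'₁,…,c'_{d-1}) ≤ 1`,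
while `J = (c'₁, …, c'_{d-1}, c_d)` and `b_i + λ_i b_d ≡ c'_i mod J²`. -/
theorem general_position {R : Type} [CommRing R] [IsNoetherianRing R]
    (n : ℕ) (hdim : ringKrullDim R = (n + 1 : ℕ))
    (J : Ideal R) (hht : idealHeight J = (n + 1 : ℕ))
    (b c : Fin (n + 1) → R)
    (hbJ : ∀ i, b i ∈ J)
    (hbgen : J = Ideal.span (Set.range b) ⊔ J ^ 2)
    (hc : J = Ideal.span (Set.range c))
    (hbc : ∀ i, b i - c i ∈ J ^ 2) :
    ∃ lam : Fin n → R,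
      ringKrullDim (R ⧸ Ideal.span
        (Set.range (fun i : Fin n => c i.castSucc + lam i * c (Fin.last n)))) ≤ 1 ∧
      J = Ideal.span (insert (c (Fin.last n))
        (Set.range (fun i : Fin n => c i.castSucc + lam i * c (Fin.last n)))) ∧
      ∀ i : Fin n,
        (b i.castSucc + lam i * b (Fin.last n)) -
          (c i.castSucc + lam i * c (Fin.last n)) ∈ J ^ 2 :=
  general_position_general n hdim J hht b c hc hbc
end
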